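/- arXiv:1207.1321 — 3 statements merged into one kernel-verified Lean document; each statement's English description precedes it below -/
import Mathlib

section
/- For |x| < l and a nonnegative integer k, the principal value integral ∫_{-l}^{l} r^k/(r−x) dr equals −∑_{j≥0, j≠k} ((1−(−1)^{j−k})/(j−k)) x^j l^{k−j}, where the series converges absolutely. -/
/-!
Long division `r ^ k = (r - x) Q(r) + x ^ k` splits the integrand into a polynomial `Q`, whose
integral over the excised interval `(x - ε, x + ε)` tends to `0`, and `x ^ k / (r - x)`, whose
integral over `(-l, l) \ (x - ε, x + ε)` equals `x ^ k log ((l - x) / (l + x))` for every small `ε`.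
On the series side, the terms `j < k` reassemble `-∫_{-l}^{l} Q` (put `j = k - 1 - i`), and the tail
`j > k` is `x ^ k` times the difference of the series of `-log (1 - u)` at `u = x / l` and `u = -x / l`.
-/

open MeasureTheory Filter Set Topology Real

noncomputable section

-- `(r ^ k - x ^ k) / (r - x)` as a polynomial in `r`
def quotPowSub (x : ℝ) (k : ℕ) (r : ℝ) : ℝ :=
  ∑ i ∈ Finset.range k, r ^ i * x ^ (k - 1 - i)

section Integral

variable {x : ℝ} {k : ℕ}

lemma pow_div_sub_eq_quotPowSub_add {r : ℝ} (hr : r ≠ x) :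
    r ^ k / (r - x) = quotPowSub x k r + x ^ k * (r - x)⁻¹ := by
  have hsub : r - x ≠ 0 := sub_ne_zero.mpr hr
  have := geom_sum₂_mul r x k
  unfold quotPowSub
  field_simp
  linarith

lemma continuous_quotPowSub : Continuous (quotPowSub x k) := by
  unfold quotPowSub
  fun_prop

lemma integral_quotPowSub (a b : ℝ) :
    ∫ r in a..b, quotPowSub x k r =
      ∑ i ∈ Finset.range k, (b ^ (i + 1) - a ^ (i + 1)) / (i + 1) * x ^ (k - 1 - i) := by
  unfold quotPowSub
  rw [intervalIntegral.integral_finsetSum fun i _ => by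
    exact ((continuous_pow i).mul continuous_const).intervalIntegrable _ _]
  refine Finset.sum_congr rfl fun i _ => ?_
  rw [intervalIntegral.integral_mul_const, integral_pow]

lemma integral_pow_div_sub {a b : ℝ} (hab : a ≤ b) (hx : x ∉ Icc a b) :
    ∫ r in a..b, r ^ k / (r - x) =
      (∫ r in a..b, quotPowSub x k r) + x ^ k * log ((b - x) / (a - x)) := by
  have hne : ∀ r ∈ uIcc a b, r - x ≠ 0 := fun r hr =>
    sub_ne_zero.mpr fun h => hx (h ▸ uIcc_of_le hab ▸ hr)
  have hinv : IntervalIntegrable (fun r => (r - x)⁻¹) volume a b :=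
    (ContinuousOn.inv₀ (by fun_prop) hne).intervalIntegrable
  rw [intervalIntegral.integral_congr fun r hr =>
      pow_div_sub_eq_quotPowSub_add (sub_ne_zero.mp (hne r hr)),
    intervalIntegral.integral_add (continuous_quotPowSub.intervalIntegrable _ _) (hinv.const_mul _),
    intervalIntegral.integral_const_mul, intervalIntegral.integral_comp_sub_right (fun u => u⁻¹),
    integral_inv]
  rw [uIcc_of_le (by linarith : a - x ≤ b - x)]
  exact fun h0 => hx ⟨by linarith [h0.1], by linarith [h0.2]⟩

lemma setIntegral_Ioo_diff_Ioo {g : ℝ → ℝ} {a b c d : ℝ} (hac : a ≤ c) (hcd : c < d)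
    (hdb : d ≤ b) (hgac : ContinuousOn g (Icc a c)) (hgdb : ContinuousOn g (Icc d b)) :
    ∫ r in Ioo a b \ Ioo c d, g r = (∫ r in a..c, g r) + ∫ r in d..b, g r := by
  have hset : Ioo a b \ Ioo c d = Ioc a c ∪ Ico d b := by
    ext r
    simp only [Set.mem_sdiff, mem_Ioo, mem_union, mem_Ioc, mem_Ico]
    grind
  have hdisj : Disjoint (Ioc a c) (Ico d b) :=
    Set.disjoint_left.mpr fun r hr hr' => (hr.2.trans_lt hcd).not_ge hr'.1
  rw [hset, setIntegral_union hdisj measurableSet_Ico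
      (hgac.integrableOn_Icc.mono_set Ioc_subset_Icc_self)
      (hgdb.integrableOn_Icc.mono_set Ico_subset_Icc_self),
    intervalIntegral.integral_of_le hac, intervalIntegral.integral_of_le hdb,
    integral_Ico_eq_integral_Ioo, ← integral_Ioc_eq_integral_Ioo]

lemma continuousOn_pow_div_sub {s : Set ℝ} (hx : x ∉ s) :
    ContinuousOn (fun r => r ^ k / (r - x)) s :=
  (continuous_pow k).continuousOn.div (by fun_prop) fun r hr =>
    sub_ne_zero.mpr fun h => hx (h ▸ hr)

lemma setIntegral_pow_div_sub_punctured {a b ε : ℝ} (hε : 0 < ε) (ha : a < x - ε)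
    (hb : x + ε < b) :
    ∫ r in Ioo a b \ Ioo (x - ε) (x + ε), r ^ k / (r - x) =
      (∫ r in a..b, quotPowSub x k r) - (∫ r in (x - ε)..(x + ε), quotPowSub x k r) +
        x ^ k * (log (b - x) - log (x - a)) := by
  have hleft : x ∉ Icc a (x - ε) := fun h => by linarith [h.2]
  have hright : x ∉ Icc (x + ε) b := fun h => by linarith [h.1]
  rw [setIntegral_Ioo_diff_Ioo ha.le (by linarith) hb.le (continuousOn_pow_div_sub hleft)
      (continuousOn_pow_div_sub hright), integral_pow_div_sub ha.le hleft,
    integral_pow_div_sub hb.le hright]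
  have hint : ∀ c d : ℝ, IntervalIntegrable (quotPowSub x k) volume c d :=
    continuous_quotPowSub.intervalIntegrable
  have hsplit := intervalIntegral.integral_add_adjacent_intervals (hint a (x - ε)) (hint _ (x + ε))
  have hsplit' := intervalIntegral.integral_add_adjacent_intervals (hint a (x + ε)) (hint _ b)
  have hlog : log ((x - ε - x) / (a - x)) + log ((b - x) / (x + ε - x)) =
      log (b - x) - log (x - a) := by
    rw [show (x - ε - x) / (a - x) = ε / (x - a) by rw [← neg_div_neg_eq]; ring_nf,
      add_sub_cancel_left, log_div hε.ne' (by linarith), log_div (by linarith) hε.ne']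
    ring
  linear_combination hsplit + hsplit' + x ^ k * hlog

lemma tendsto_intervalIntegral_sub_add_zero {f : ℝ → ℝ} (hf : Continuous f) (x : ℝ) :
    Tendsto (fun ε => ∫ r in (x - ε)..(x + ε), f r) (𝓝 0) (𝓝 0) := by
  set F := fun b => ∫ r in (0 : ℝ)..b, f r
  have hF : Continuous F := intervalIntegral.continuous_primitive hf.intervalIntegrable 0
  have hdiff : (fun ε => ∫ r in (x - ε)..(x + ε), f r) = fun ε => F (x + ε) - F (x - ε) :=
    funext fun ε => (intervalIntegral.integral_interval_sub_left
      (hf.intervalIntegrable _ _) (hf.intervalIntegrable _ _)).symm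
  rw [hdiff]
  have hcont : Continuous fun ε => F (x + ε) - F (x - ε) := by fun_prop
  simpa using hcont.tendsto 0

theorem tendsto_pv_integral_pow_div_sub {a b : ℝ} (hax : a < x) (hxb : x < b) :
    Tendsto (fun ε => ∫ r in Ioo a b \ Ioo (x - ε) (x + ε), r ^ k / (r - x)) (𝓝[>] 0)
      (𝓝 ((∫ r in a..b, quotPowSub x k r) + x ^ k * (log (b - x) - log (x - a)))) := by
  set P := ∫ r in a..b, quotPowSub x k r
  set L := x ^ k * (log (b - x) - log (x - a))
  have hlim : Tendsto (fun ε => P - (∫ r in (x - ε)..(x + ε), quotPowSub x k r) + L) (𝓝[>] 0)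
      (𝓝 (P - 0 + L)) :=
    ((tendsto_const_nhds.sub (tendsto_intervalIntegral_sub_add_zero continuous_quotPowSub x)).add
      tendsto_const_nhds).mono_left nhdsWithin_le_nhds
  rw [sub_zero] at hlim
  refine hlim.congr' ?_
  filter_upwards [Ioo_mem_nhdsGT (lt_min (sub_pos.2 hax) (sub_pos.2 hxb))] with ε ⟨hε, hεδ⟩
  exact (setIntegral_pow_div_sub_punctured hε (by linarith [min_le_left (x - a) (b - x)])
    (by linarith [min_le_right (x - a) (b - x)])).symm

end Integral

def pvSeriesTerm (l x : ℝ) (k j : ℕ) : ℝ :=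
  if j = k then 0 else
    (1 - (-1 : ℝ) ^ ((j : ℤ) - (k : ℤ))) / ((j : ℝ) - (k : ℝ)) * x ^ j * l ^ ((k : ℤ) - (j : ℤ))

section Series

variable {l x : ℝ} {k : ℕ}

lemma abs_pvSeriesTerm_le (hl : 0 < l) (j : ℕ) :
    |pvSeriesTerm l x k j| ≤ 2 * l ^ k * (|x| / l) ^ j := by
  unfold pvSeriesTerm
  split_ifs with hj
  · rw [abs_zero]
    positivity
  have hnum : |1 - (-1 : ℝ) ^ ((j : ℤ) - k)| ≤ 2 := by
    rcases ((j : ℤ) - k).even_or_odd with h | h <;> norm_num [h.neg_one_zpow]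
  have hden : 1 ≤ |(j : ℝ) - k| := by
    exact_mod_cast Int.one_le_abs (sub_ne_zero.mpr (by exact_mod_cast hj) : (j : ℤ) - k ≠ 0)
  calc _ = |1 - (-1 : ℝ) ^ ((j : ℤ) - k)| / |(j : ℝ) - k| * (|x| ^ j * l ^ ((k : ℤ) - j)) := by
        rw [abs_mul, abs_mul, abs_div, abs_pow, abs_of_pos (zpow_pos hl _)]
        ring
    _ ≤ 2 / 1 * (|x| ^ j * l ^ ((k : ℤ) - j)) := by gcongr
    _ = 2 * l ^ k * (|x| / l) ^ j := by
        rw [zpow_sub₀ hl.ne', zpow_natCast, zpow_natCast, div_pow]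
        field_simp

lemma summable_abs_pvSeriesTerm (hl : 0 < l) (hx : |x| < l) :
    Summable fun j => |pvSeriesTerm l x k j| :=
  Summable.of_nonneg_of_le (fun _ => abs_nonneg _) (abs_pvSeriesTerm_le hl)
    ((summable_geometric_of_lt_one (by positivity) ((div_lt_one hl).mpr hx)).mul_left _)

lemma pvSeriesTerm_add_succ (hl : l ≠ 0) (n : ℕ) :
    pvSeriesTerm l x k (n + (k + 1)) =
      x ^ k * ((x / l) ^ (n + 1) / (n + 1) - (-(x / l)) ^ (n + 1) / (n + 1)) := by
  have e1 : ((n + (k + 1) : ℕ) : ℤ) - k = ((n + 1 : ℕ) : ℤ) := by push_cast; ring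
  have e2 : ((n + (k + 1) : ℕ) : ℝ) - k = n + 1 := by push_cast; ring
  have e3 : (k : ℤ) - ((n + (k + 1) : ℕ) : ℤ) = -((n + 1 : ℕ) : ℤ) := by push_cast; ring
  rw [pvSeriesTerm, if_neg (by omega), e1, e2, e3, zpow_natCast, zpow_neg, zpow_natCast,
    neg_pow (x / l), div_pow]
  field_simp
  ring

lemma hasSum_pvSeriesTerm_add (hl : 0 < l) (hx : |x| < l) :
    HasSum (fun n => pvSeriesTerm l x k (n + (k + 1))) (x ^ k * (log (l + x) - log (l - x))) := by
  have hu : |x / l| < 1 := by rwa [abs_div, abs_of_pos hl, div_lt_one hl]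
  have hlog := ((hasSum_pow_div_log_of_abs_lt_one hu).sub
    (hasSum_pow_div_log_of_abs_lt_one (x := -(x / l)) (by rwa [abs_neg]))).mul_left (x ^ k)
  have hval : log (l + x) - log (l - x) = -log (1 - x / l) - -log (1 - -(x / l)) := by
    rw [show l + x = l * (1 - -(x / l)) by field_simp; ring, show l - x = l * (1 - x / l) by
      field_simp, log_mul hl.ne' (by linarith [abs_lt.mp hu]),
      log_mul hl.ne' (by linarith [abs_lt.mp hu])]
    ring
  rw [hval, funext (pvSeriesTerm_add_succ hl.ne')]
  exact hlog

lemma sum_range_pvSeriesTerm (hl : l ≠ 0) :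
    ∑ j ∈ Finset.range k, pvSeriesTerm l x k j = -∫ r in (-l)..l, quotPowSub x k r := by
  rw [integral_quotPowSub, ← Finset.sum_range_reflect, ← Finset.sum_neg_distrib]
  refine Finset.sum_congr rfl fun i hi => ?_
  have hik := Finset.mem_range.mp hi
  have e1 : ((k - 1 - i : ℕ) : ℤ) - k = -((i + 1 : ℕ) : ℤ) := by omega
  have e2 : (k : ℤ) - ((k - 1 - i : ℕ) : ℤ) = ((i + 1 : ℕ) : ℤ) := by omega
  have e3 : ((k - 1 - i : ℕ) : ℝ) - k = -(i + 1) := by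
    rw [Nat.cast_sub (by omega), Nat.cast_sub (by omega)]
    push_cast
    ring
  have hodd : ((-1 : ℝ) ^ (i + 1))⁻¹ = (-1) ^ (i + 1) := by
    rcases (i + 1).even_or_odd with h | h <;> norm_num [h.neg_one_pow]
  rw [pvSeriesTerm, if_neg (by omega), e1, e2, e3, zpow_neg, zpow_natCast, zpow_natCast, hodd,
    neg_pow l]
  field_simp

lemma tsum_pvSeriesTerm (hl : 0 < l) (hx : |x| < l) :
    ∑' j, pvSeriesTerm l x k j =
      -(∫ r in (-l)..l, quotPowSub x k r) + x ^ k * (log (l + x) - log (l - x)) := by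
  rw [← (summable_abs_iff.mp (summable_abs_pvSeriesTerm hl hx)).sum_add_tsum_nat_add (k + 1),
    (hasSum_pvSeriesTerm_add hl hx).tsum_eq, Finset.sum_range_succ, sum_range_pvSeriesTerm hl.ne',
    pvSeriesTerm, if_pos rfl, add_zero]

end Series

end

/-- PV ∫_{-l}^{l} r^k/(r−x) dr = −∑_{j≥0, j≠k} ((1−(−1)^{j−k})/(j−k)) x^j l^{k−j},
with absolute convergence of the series. -/
theorem stmt_0 (l x : ℝ) (k : ℕ) (hl : 0 < l) (hx : |x| < l) :
    Summable (fun j : ℕ =>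
      |if j = k then (0 : ℝ) else
        (1 - (-1 : ℝ) ^ ((j : ℤ) - (k : ℤ))) / ((j : ℝ) - (k : ℝ)) * x ^ j * l ^ ((k : ℤ) - (j : ℤ))|)
    ∧
    Tendsto (fun ε : ℝ =>
        ∫ r in Ioo (-l) l \ Ioo (x - ε) (x + ε), r ^ k / (r - x))
      (nhdsWithin 0 (Ioi 0))
      (nhds (-∑' j : ℕ,
        if j = k then (0 : ℝ) else
          (1 - (-1 : ℝ) ^ ((j : ℤ) - (k : ℤ))) / ((j : ℝ) - (k : ℝ)) * x ^ j * l ^ ((k : ℤ) - (j : ℤ)))) := by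
  obtain ⟨hlx, hxl⟩ := abs_lt.mp hx
  refine ⟨summable_abs_pvSeriesTerm hl hx, ?_⟩
  convert tendsto_pv_integral_pow_div_sub (k := k) hlx hxl using 2
  change -∑' j, pvSeriesTerm l x k j = _
  rw [tsum_pvSeriesTerm hl hx, sub_neg_eq_add, add_comm x l]
  ring
end

section
/- For |x| > l and a positive integer k, the principal value integral ∫_{|r|>l} r^{−k}/(r−x) dr equals ∑_{j≥1, j≠k} ((1−(−1)^{j−k})/(j−k)) x^{−j} l^{j−k}, with absolute convergence. -/
/-!
The integrand has the explicit primitive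
`G(r) = x⁻ᵏ (log |r - x| - log |r| + ∑_{m=1}^{k-1} (x/r)^m / m)`, which tends to `0` at `±∞`.
Hence the truncated integral equals `G(-l) - G(l) + G(x - ε) - G(x + ε)`; the logarithmic
singularities at `r = x` cancel in the last difference, so it tends to `0` with `ε`.
With `t = l / x`, `G(-l) - G(l) = x⁻ᵏ (log (1 + t) - log (1 - t) + finite sum)`: the Taylor
series of the logarithms gives the terms `j > k` of the series, the finite sum the terms `j < k`.
-/

open MeasureTheory Filter Set Topology

/-- `Real.log` is `log |·|`, so this is a primitive of `r ^ (-k) / (r - x)` on all of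
`ℝ \ {0, x}`. -/
noncomputable def pvPrimitive (x : ℝ) (k : ℕ) (r : ℝ) : ℝ :=
  (x ^ k)⁻¹ * (Real.log (r - x) - Real.log r + ∑ m ∈ Finset.Ico 1 k, (x / r) ^ m / m)

lemma zpow_neg_div_sub_eq {x r : ℝ} (k : ℕ) (hx : x ≠ 0) (hr : r ≠ 0) (hrx : r ≠ x) :
    r ^ (-(k : ℤ)) / (r - x) =
      (x ^ k)⁻¹ * ((r - x)⁻¹ - r⁻¹ * ∑ m ∈ Finset.range k, (x / r) ^ m) := by
  have hq : x / r - 1 ≠ 0 := by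
    rw [div_sub_one hr]; exact div_ne_zero (sub_ne_zero.mpr hrx.symm) hr
  rw [geom_sum_eq (sub_ne_zero.mp hq), zpow_neg, zpow_natCast, div_pow]
  have : r - x ≠ 0 := sub_ne_zero.mpr hrx
  field_simp
  ring

lemma hasDerivAt_div_pow_div (x : ℝ) {r : ℝ} {m : ℕ} (hm : m ≠ 0) (hr : r ≠ 0) :
    HasDerivAt (fun r => (x / r) ^ m / m) (-(r⁻¹ * (x / r) ^ m)) r := by
  have h := (((hasDerivAt_inv hr).const_mul x).fun_pow m).div_const (m : ℝ)
  refine h.congr_deriv ?_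
  obtain ⟨n, rfl⟩ : ∃ n, m = n + 1 := ⟨m - 1, by omega⟩
  rw [Nat.add_sub_cancel, ← div_eq_mul_inv x r, div_pow, div_pow]
  field_simp
  ring

lemma hasDerivAt_pvPrimitive {x r : ℝ} {k : ℕ} (hk : 1 ≤ k) (hx : x ≠ 0) (hr : r ≠ 0)
    (hrx : r ≠ x) : HasDerivAt (pvPrimitive x k) (r ^ (-(k : ℤ)) / (r - x)) r := by
  have hlog : HasDerivAt (fun r => Real.log (r - x) - Real.log r) ((r - x)⁻¹ - r⁻¹) r :=
    ((hasDerivAt_id r).sub_const x |>.log (sub_ne_zero.mpr hrx)).sub (Real.hasDerivAt_log hr)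
      |>.congr_deriv (by simp)
  have hsum := HasDerivAt.fun_sum (u := Finset.Ico 1 k) fun m hm =>
    hasDerivAt_div_pow_div x (Nat.one_le_iff_ne_zero.mp (Finset.mem_Ico.mp hm).1) hr
  refine ((hlog.add hsum).const_mul (x ^ k)⁻¹).congr_deriv ?_
  rw [zpow_neg_div_sub_eq k hx hr hrx, Finset.sum_range_eq_add_Ico _ hk, Finset.sum_neg_distrib,
    ← Finset.mul_sum]
  ring

lemma tendsto_pvPrimitive_cobounded (x : ℝ) (k : ℕ) :
    Tendsto (pvPrimitive x k) (Bornology.cobounded ℝ) (𝓝 0) := by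
  set H : ℝ → ℝ := fun u =>
    (x ^ k)⁻¹ * (Real.log (1 - x * u) + ∑ m ∈ Finset.Ico 1 k, (x * u) ^ m / m)
  have hH : ContinuousAt H 0 := by
    refine continuousAt_const.mul (ContinuousAt.add ?_ (by fun_prop))
    exact (continuousAt_const.sub (continuousAt_const.mul continuousAt_id)).log (by simp)
  have hH0 : H 0 = 0 := by
    simp +contextual [H, Finset.sum_eq_zero, zero_pow, Nat.one_le_iff_ne_zero]
  refine (hH0 ▸ hH.tendsto.comp tendsto_inv₀_cobounded).congr' ?_
  filter_upwards [tendsto_norm_cobounded_atTop.eventually_gt_atTop |x|] with r hr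
  have hr0 : r ≠ 0 := by rintro rfl; simp at hr; linarith [abs_nonneg x]
  have hrx : r - x ≠ 0 := by
    rintro h; rw [sub_eq_zero.mp h, Real.norm_eq_abs] at hr; exact lt_irrefl _ hr
  have hlog : Real.log (1 - x / r) = Real.log (r - x) - Real.log r := by
    rw [← Real.log_div hrx hr0, sub_div, div_self hr0]
  simp only [Function.comp_apply, H, ← div_eq_mul_inv, hlog, pvPrimitive]

lemma tendsto_pvPrimitive_sub_sub_add (x : ℝ) (k : ℕ) (hx : x ≠ 0) :
    Tendsto (fun ε => pvPrimitive x k (x - ε) - pvPrimitive x k (x + ε)) (𝓝 0) (𝓝 0) := by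
  set R : ℝ → ℝ := fun r => ∑ m ∈ Finset.Ico 1 k, (x / r) ^ m / m - Real.log r
  have hR : ContinuousAt R x := by
    refine ContinuousAt.sub ?_ (Real.continuousAt_log hx)
    exact tendsto_finsetSum _ fun m _ =>
      ((continuousAt_const.div continuousAt_id hx).pow m).div_const _
  -- `log |-ε| = log |ε|`: the singular parts of `G` at `x ± ε` cancel.
  have hjump : ∀ ε, pvPrimitive x k (x - ε) - pvPrimitive x k (x + ε) =
      (x ^ k)⁻¹ * (R (x - ε) - R (x + ε)) := by
    intro ε
    simp only [pvPrimitive, R, sub_sub_cancel_left, add_sub_cancel_left, Real.log_neg_eq_log]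
    ring
  have hsub : Tendsto (fun ε => R (x - ε) - R (x + ε)) (𝓝 0) (𝓝 (R x - R x)) :=
    (hR.tendsto.comp ((continuous_sub_left x).tendsto' 0 x (sub_zero x))).sub
      (hR.tendsto.comp ((continuous_const_add x).tendsto' 0 x (add_zero x)))
  simpa [hjump] using hsub.const_mul (x ^ k)⁻¹

lemma integrableOn_Ici_zpow_neg_div_sub {x a : ℝ} {k : ℕ} (hk : 1 ≤ k) (hx : x ≠ 0) (ha : 0 < a)
    (hxa : x < a) : IntegrableOn (fun r : ℝ => r ^ (-(k : ℤ)) / (r - x)) (Ici a) := by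
  refine (integrableOn_Ici_iff_integrableOn_Ioi).mpr (integrableOn_Ioi_deriv_of_nonneg'
    (fun r hr => hasDerivAt_pvPrimitive hk hx ?_ ?_) (fun r hr => ?_)
    ((tendsto_pvPrimitive_cobounded x k).mono_left IsOrderBornology.atTop_le_cobounded))
  · exact (ha.trans_le hr).ne'
  · exact (hxa.trans_le hr).ne'
  · exact (div_pos (zpow_pos (ha.trans hr) _) (sub_pos.mpr (hxa.trans hr))).le

lemma zpow_neg_div_sub_comp_neg (x s : ℝ) (k : ℕ) :
    (-s) ^ (-(k : ℤ)) / (-s - x) = -(-1) ^ k * (s ^ (-(k : ℤ)) / (s - -x)) := by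
  rw [zpow_neg, zpow_neg, zpow_natCast, zpow_natCast, neg_pow, mul_inv, ← inv_pow, inv_neg_one,
    show -s - x = -(s - -x) by ring, div_neg]
  ring

lemma integrableOn_Iic_zpow_neg_div_sub {x a : ℝ} {k : ℕ} (hk : 1 ≤ k) (hx : x ≠ 0) (ha : a < 0)
    (hax : a < x) : IntegrableOn (fun r : ℝ => r ^ (-(k : ℤ)) / (r - x)) (Iic a) := by
  have h : IntegrableOn (fun s : ℝ => -(-1) ^ k * (s ^ (-(k : ℤ)) / (s - -x))) (Ici (-a)) :=
    (integrableOn_Ici_zpow_neg_div_sub hk (neg_ne_zero.mpr hx) (neg_pos.mpr ha)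
      (neg_lt_neg hax)).const_mul (-(-1) ^ k)
  rw [← (Measure.measurePreserving_neg volume).integrableOn_comp_preimage
    (Homeomorph.neg ℝ).measurableEmbedding, neg_preimage, neg_Iic]
  exact h.congr_fun (fun s _ => (zpow_neg_div_sub_comp_neg x s k).symm) measurableSet_Ici

section Gaps

variable {E : Type*} [NormedAddCommGroup E] [NormedSpace ℝ E] [CompleteSpace E]

lemma integral_compl_Ioo_union_Ioo {f F : ℝ → E} {a b c d : ℝ} (hab : a < b) (hbc : b ≤ c)
    (hcd : c < d) (hF : ∀ r ∉ Ioo a b ∪ Ioo c d, HasDerivAt F (f r) r)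
    (hf : ContinuousOn f (Ioo a b ∪ Ioo c d)ᶜ) (hIic : IntegrableOn f (Iic a))
    (hIci : IntegrableOn f (Ici d)) (hbot : Tendsto F atBot (𝓝 0))
    (htop : Tendsto F atTop (𝓝 0)) :
    ∫ r in (Ioo a b ∪ Ioo c d)ᶜ, f r = F a - F b + F c - F d := by
  have hT : (Ioo a b ∪ Ioo c d)ᶜ = Iic a ∪ Icc b c ∪ Ici d := by ext; grind
  have hF' : ∀ r ∈ Iic a ∪ Icc b c ∪ Ici d, HasDerivAt F (f r) r := fun r hr =>
    hF r (by rwa [← mem_compl_iff, hT])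
  have hfmid : ContinuousOn f (Icc b c) :=
    hf.mono (hT ▸ subset_union_right.trans subset_union_left)
  have hleft : ∫ r in Iic a, f r = F a := by
    simpa using integral_Iic_of_hasDerivAt_of_tendsto'
      (fun r hr => hF' r (.inl (.inl hr))) hIic hbot
  have hmid : ∫ r in Icc b c, f r = F c - F b := by
    rw [integral_Icc_eq_integral_Ioc, ← intervalIntegral.integral_of_le hbc]
    exact intervalIntegral.integral_eq_sub_of_hasDerivAt
      (fun r hr => hF' r (.inl (.inr (uIcc_of_le hbc ▸ hr))))
      (hfmid.intervalIntegrable_of_Icc hbc)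
  have hright : ∫ r in Ici d, f r = -F d := by
    simpa [integral_Ici_eq_integral_Ioi] using integral_Ioi_of_hasDerivAt_of_tendsto'
      (fun r hr => hF' r (.inr hr)) (hIci.mono_set Ioi_subset_Ici_self) htop
  have hmidInt : IntegrableOn f (Icc b c) := hfmid.integrableOn_Icc
  rw [hT, setIntegral_union _ measurableSet_Ici (hIic.union hmidInt) hIci,
    setIntegral_union _ measurableSet_Icc hIic hmidInt, hleft, hmid, hright]
  · abel
  · exact disjoint_left.mpr fun r h₁ h₂ => by grind
  · exact disjoint_left.mpr fun r h₁ h₂ => by grind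

end Gaps

lemma setIntegral_abs_gt_diff_Ioo_eq {l x ε : ℝ} {k : ℕ} (hk : 1 ≤ k) (hl : 0 < l) (hε : 0 < ε)
    (hεx : ε < |x| - l) :
    ∫ r in {r : ℝ | l < |r|} \ Ioo (x - ε) (x + ε), r ^ (-(k : ℤ)) / (r - x) =
      pvPrimitive x k (-l) - pvPrimitive x k l +
        (pvPrimitive x k (x - ε) - pvPrimitive x k (x + ε)) := by
  have hx : x ≠ 0 := by rintro rfl; simp at hεx; linarith
  have hS : {r : ℝ | l < |r|} \ Ioo (x - ε) (x + ε) = (Icc (-l) l ∪ Ioo (x - ε) (x + ε))ᶜ := by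
    ext r; simp only [Set.mem_sdiff, mem_ofPred_eq, mem_compl_iff, mem_union, mem_Icc]
    grind
  have hS' : ((Icc (-l) l ∪ Ioo (x - ε) (x + ε))ᶜ : Set ℝ) =ᵐ[volume]
      ((Ioo (-l) l ∪ Ioo (x - ε) (x + ε))ᶜ : Set ℝ) :=
    (Ioo_ae_eq_Icc.symm.union (EventuallyEq.refl _ _)).compl
  have hgap : ∀ r ∉ Ioo (-l) l ∪ Ioo (x - ε) (x + ε), r ≠ 0 ∧ r ≠ x := by
    intro r hr
    refine ⟨?_, ?_⟩ <;> rintro rfl <;> simp at hr <;> linarith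
  have hF : ∀ r ∉ Ioo (-l) l ∪ Ioo (x - ε) (x + ε),
      HasDerivAt (pvPrimitive x k) (r ^ (-(k : ℤ)) / (r - x)) r := fun r hr =>
    hasDerivAt_pvPrimitive hk hx (hgap r hr).1 (hgap r hr).2
  have hf : ContinuousOn (fun r : ℝ => r ^ (-(k : ℤ)) / (r - x))
      (Ioo (-l) l ∪ Ioo (x - ε) (x + ε))ᶜ := fun r hr =>
    ((continuousAt_zpow₀ r _ (.inl (hgap r hr).1)).div (continuousAt_id.sub continuousAt_const)
      (sub_ne_zero.mpr (hgap r hr).2)).continuousWithinAt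
  have hbot := (tendsto_pvPrimitive_cobounded x k).mono_left IsOrderBornology.atBot_le_cobounded
  have htop := (tendsto_pvPrimitive_cobounded x k).mono_left IsOrderBornology.atTop_le_cobounded
  rw [hS, setIntegral_congr_set hS']
  rcases lt_abs.mp (by linarith : l < |x|) with hxl | hxl
  · rw [abs_of_pos (hl.trans hxl)] at hεx
    rw [integral_compl_Ioo_union_Ioo (by linarith) (by linarith) (by linarith) hF hf
      (integrableOn_Iic_zpow_neg_div_sub hk hx (by linarith) (by linarith))
      (integrableOn_Ici_zpow_neg_div_sub hk hx (by linarith) (by linarith)) hbot htop]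
    abel
  · rw [abs_of_neg (by linarith)] at hεx
    rw [union_comm] at hF hf ⊢
    rw [integral_compl_Ioo_union_Ioo (by linarith) (by linarith) (by linarith) hF hf
      (integrableOn_Iic_zpow_neg_div_sub hk hx (by linarith) (by linarith))
      (integrableOn_Ici_zpow_neg_div_sub hk hx (by linarith) (by linarith)) hbot htop]
    abel

/-- With `p = j - k` and `t = l / x`, the `j`-th term of the series is `x⁻ᵏ * pvCoeff t p`.
At `p = 0` Lean's `0 / 0 = 0` makes it vanish, matching the excluded term `j = k`. -/
noncomputable def pvCoeff (t : ℝ) (p : ℤ) : ℝ := (1 - (-1 : ℝ) ^ p) / p * t ^ p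

lemma hasSum_pvCoeff_add_one {t : ℝ} (ht : |t| < 1) :
    HasSum (fun n : ℕ => pvCoeff t (n + 1)) (Real.log (1 + t) - Real.log (1 - t)) := by
  have h := (Real.hasSum_pow_div_log_of_abs_lt_one ht).sub
    (Real.hasSum_pow_div_log_of_abs_lt_one (x := -t) (by rwa [abs_neg]))
  rw [sub_neg_eq_add, neg_add_eq_sub, sub_neg_eq_add] at h
  refine h.congr_fun fun n => ?_
  rw [pvCoeff, show ((n : ℤ) + 1) = ((n + 1 : ℕ) : ℤ) by push_cast; ring, zpow_natCast,
    zpow_natCast, neg_pow t]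
  push_cast
  ring

lemma HasSum.natCast_add_one_sub {M : Type*} [AddCommGroup M] [TopologicalSpace M]
    [IsTopologicalAddGroup M] {φ : ℤ → M} {s : M} (h : HasSum (fun n : ℕ => φ (n + 1)) s)
    (k : ℕ) : HasSum (fun n : ℕ => φ (n + 1 - k)) (s + ∑ m ∈ Finset.range k, φ (-m)) := by
  refine (hasSum_nat_add_iff' k).mp ?_
  have hfin : ∑ i ∈ Finset.range k, φ ((i : ℕ) + 1 - k) = ∑ m ∈ Finset.range k, φ (-m) := by
    rw [← Finset.sum_range_reflect]
    refine Finset.sum_congr rfl fun m hm => ?_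
    rw [Finset.mem_range] at hm
    congr 1
    omega
  rw [hfin, add_sub_cancel_right]
  refine h.congr_fun fun n => congrArg φ ?_
  push_cast
  ring

lemma pvCoeff_neg_natCast (t : ℝ) (m : ℕ) :
    pvCoeff t (-m) = ((-t⁻¹) ^ m - t⁻¹ ^ m) / m := by
  rw [pvCoeff, zpow_neg, zpow_neg, zpow_natCast, zpow_natCast, ← inv_pow, ← inv_pow, inv_neg_one,
    neg_pow t⁻¹]
  push_cast
  ring

lemma pvPrimitive_neg_sub_pvPrimitive {l x : ℝ} {k : ℕ} (hk : 1 ≤ k) (hl : 0 < l)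
    (hx : l < |x|) :
    pvPrimitive x k (-l) - pvPrimitive x k l = (x ^ k)⁻¹ * (Real.log (1 + l / x) -
      Real.log (1 - l / x) + ∑ m ∈ Finset.range k, pvCoeff (l / x) (-m)) := by
  have hx0 : x ≠ 0 := abs_pos.mp (hl.trans hx)
  have ht : |l / x| < 1 := by rwa [abs_div, abs_of_pos hl, div_lt_one (hl.trans hx)]
  have h1 : 1 + l / x ≠ 0 := by intro h; rw [eq_neg_of_add_eq_zero_right h] at ht; simp at ht
  have h2 : 1 - l / x ≠ 0 := by intro h; rw [← sub_eq_zero.mp h] at ht; simp at ht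
  have hlog₁ : Real.log (-l - x) = Real.log (-x) + Real.log (1 + l / x) := by
    rw [← Real.log_mul (neg_ne_zero.mpr hx0) h1]; congr 1; field_simp; ring
  have hlog₂ : Real.log (l - x) = Real.log (-x) + Real.log (1 - l / x) := by
    rw [← Real.log_mul (neg_ne_zero.mpr hx0) h2]; congr 1; field_simp; ring
  have hsum : ∑ m ∈ Finset.range k, pvCoeff (l / x) (-m) =
      ∑ m ∈ Finset.Ico 1 k, (x / -l) ^ m / m - ∑ m ∈ Finset.Ico 1 k, (x / l) ^ m / m := by
    simp only [pvCoeff_neg_natCast, inv_div, Finset.sum_range_eq_add_Ico _ hk,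
      ← Finset.sum_sub_distrib, div_neg]
    simp [sub_div]
  rw [pvPrimitive, pvPrimitive, hsum, hlog₁, hlog₂, Real.log_neg_eq_log l]
  ring

lemma hasSum_pvSeries {l x : ℝ} {k : ℕ} (hk : 1 ≤ k) (hl : 0 < l) (hx : l < |x|) :
    HasSum (fun n : ℕ =>
      if n + 1 = k then (0 : ℝ) else
        (1 - (-1 : ℝ) ^ (((n : ℤ) + 1) - (k : ℤ))) / (((n : ℝ) + 1) - (k : ℝ)) *
          x ^ (-((n : ℤ) + 1)) * l ^ (((n : ℤ) + 1) - (k : ℤ)))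
      (pvPrimitive x k (-l) - pvPrimitive x k l) := by
  have hx0 : x ≠ 0 := abs_pos.mp (hl.trans hx)
  have ht : |l / x| < 1 := by rwa [abs_div, abs_of_pos hl, div_lt_one (hl.trans hx)]
  rw [pvPrimitive_neg_sub_pvPrimitive hk hl hx]
  refine (((hasSum_pvCoeff_add_one ht).natCast_add_one_sub k).mul_left (x ^ k)⁻¹).congr_fun
    fun n => ?_
  split_ifs with h
  · simp [pvCoeff, show (n : ℤ) + 1 - k = 0 by omega]
  · rw [pvCoeff, div_zpow, show -((n : ℤ) + 1) = -((n : ℤ) + 1 - k) + -(k : ℤ) by ring,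
      zpow_add₀ hx0, zpow_neg x (k : ℤ), zpow_neg x, zpow_natCast]
    push_cast
    ring

/-- For |x| > l, k ≥ 1: the principal value integral
∫_{|r|>l} r^{−k}/(r−x) dr (PV at r = x) equals
∑_{j≥1, j≠k} ((1−(−1)^{j−k})/(j−k)) x^{−j} l^{j−k}, with absolute convergence.
The series over j ≥ 1 is written over n : ℕ with j = n + 1. -/
theorem stmt_3 (l x : ℝ) (k : ℕ) (hl : 0 < l) (hx : l < |x|) (hk : 1 ≤ k) :
    Summable (fun n : ℕ =>
      |if n + 1 = k then (0 : ℝ) else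
        (1 - (-1 : ℝ) ^ (((n : ℤ) + 1) - (k : ℤ))) / (((n : ℝ) + 1) - (k : ℝ)) *
          x ^ (-((n : ℤ) + 1)) * l ^ (((n : ℤ) + 1) - (k : ℤ))|)
    ∧
    Tendsto (fun ε : ℝ =>
        ∫ r in {r : ℝ | l < |r|} \ Ioo (x - ε) (x + ε), r ^ (-(k : ℤ)) / (r - x))
      (nhdsWithin 0 (Ioi 0))
      (nhds (∑' n : ℕ,
        if n + 1 = k then (0 : ℝ) else
          (1 - (-1 : ℝ) ^ (((n : ℤ) + 1) - (k : ℤ))) / (((n : ℝ) + 1) - (k : ℝ)) *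
            x ^ (-((n : ℤ) + 1)) * l ^ (((n : ℤ) + 1) - (k : ℤ)))) := by
  have hsum := hasSum_pvSeries hk hl hx
  refine ⟨summable_abs_iff.mpr hsum.summable, ?_⟩
  rw [hsum.tsum_eq]
  have hjump := (tendsto_pvPrimitive_sub_sub_add x k (abs_pos.mp (hl.trans hx))).mono_left
    (nhdsWithin_le_nhds (s := Ioi 0))
  have hlim := (tendsto_const_nhds (x := pvPrimitive x k (-l) - pvPrimitive x k l)).add hjump
  rw [add_zero] at hlim
  refine hlim.congr' ?_
  filter_upwards [Ioo_mem_nhdsGT (sub_pos.mpr hx)] with ε hε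
  exact (setIntegral_abs_gt_diff_Ioo_eq hk hl hε.1 hε.2).symm
end

section
/- The function u₂⁺(x) = K (l²−x²)^{1/2} cos(γ ln|(l+x)/(l−x)|) (the classical England solution for an interface crack opening), with K > 0 and γ ≠ 0, changes sign infinitely many times in every left neighborhood of x = l; in particular there exist sequences x_n → l⁻ with u₂⁺(x_n) > 0 and x_n' → l⁻ with u₂⁺(x_n') < 0. -/
/-!
Substituting x = l (eᵗ − 1)/(eᵗ + 1), i.e. x = l tanh (t/2), turns the logarithm in the
opening into t itself, and x → l⁻ as t → +∞. Along t = (c + 2πn)/|γ| the cosine factor is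
constantly cos c while the positive factor K √(l² − x²) does not matter for the sign, so
c = 0 and c = π give the two sequences.
-/

open Filter Set Real Topology

noncomputable def englandOpening (l K γ x : ℝ) : ℝ :=
  K * √(l ^ 2 - x ^ 2) * cos (γ * log |(l + x) / (l - x)|)

noncomputable def logRatioInv (l t : ℝ) : ℝ :=
  l * (exp t - 1) / (exp t + 1)

section logRatioInv

variable {l : ℝ}

lemma logRatioInv_mem_Ioo (hl : 0 < l) (t : ℝ) : logRatioInv l t ∈ Ioo (-l) l := by
  have he := exp_pos t
  unfold logRatioInv
  constructor
  · rw [lt_div_iff₀ (by positivity)]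
    nlinarith
  · rw [div_lt_iff₀ (by positivity)]
    nlinarith

lemma div_logRatioInv (hl : l ≠ 0) (t : ℝ) :
    (l + logRatioInv l t) / (l - logRatioInv l t) = exp t := by
  have he : exp t + 1 ≠ 0 := by positivity
  unfold logRatioInv
  field_simp
  ring

lemma log_abs_div_logRatioInv (hl : l ≠ 0) (t : ℝ) :
    log |(l + logRatioInv l t) / (l - logRatioInv l t)| = t := by
  rw [div_logRatioInv hl, abs_of_pos (exp_pos t), log_exp]

lemma tendsto_logRatioInv_atTop (hl : 0 < l) :
    Tendsto (logRatioInv l) atTop (𝓝[<] l) := by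
  refine tendsto_nhdsWithin_of_tendsto_nhds_of_eventually_within _ ?_
    (Eventually.of_forall fun t => (logRatioInv_mem_Ioo hl t).2)
  have hdenom : Tendsto (fun t => exp t + 1) atTop atTop :=
    tendsto_atTop_add_const_right _ 1 tendsto_exp_atTop
  have h := (tendsto_const_nhds (x := l)).sub
    ((tendsto_const_nhds (x := 2 * l)).div_atTop hdenom)
  rw [sub_zero] at h
  refine h.congr fun t => ?_
  have he : exp t + 1 ≠ 0 := by positivity
  unfold logRatioInv
  field_simp
  ring

end logRatioInv

lemma sqrt_sq_sub_sq_pos {l x : ℝ} (hx : x ∈ Ioo (-l) l) : 0 < √(l ^ 2 - x ^ 2) := by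
  obtain ⟨h₁, h₂⟩ := hx
  exact sqrt_pos.mpr (by nlinarith)

lemma cos_mul_div_abs {γ : ℝ} (hγ : γ ≠ 0) (s : ℝ) : cos (γ * (s / |γ|)) = cos s := by
  rcases abs_choice γ with h | h <;> rw [h]
  · rw [mul_div_cancel₀ _ hγ]
  · rw [mul_div_assoc', div_neg, cos_neg, mul_div_cancel_left₀ _ hγ]

lemma exists_tendsto_englandOpening_eq_cos {l γ : ℝ} (K : ℝ) (hl : 0 < l) (hγ : γ ≠ 0)
    (c : ℝ) :
    ∃ a : ℕ → ℝ, (∀ n, a n ∈ Ioo (-l) l) ∧ Tendsto a atTop (𝓝[<] l) ∧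
      ∀ n, englandOpening l K γ (a n) = K * √(l ^ 2 - a n ^ 2) * cos c := by
  set t : ℕ → ℝ := fun n => (c + n * (2 * π)) / |γ|
  have ht : Tendsto t atTop atTop :=
    (tendsto_atTop_add_const_left _ c
      (tendsto_natCast_atTop_atTop.atTop_mul_const (by positivity))).atTop_div_const
      (abs_pos.mpr hγ)
  refine ⟨fun n => logRatioInv l (t n), fun n => logRatioInv_mem_Ioo hl _,
    (tendsto_logRatioInv_atTop hl).comp ht, fun n => ?_⟩
  rw [englandOpening, log_abs_div_logRatioInv hl.ne', cos_mul_div_abs hγ,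
    cos_add_nat_mul_two_pi]

/-- The England interface-crack opening u₂⁺(x) = K√(l²−x²)·cos(γ ln|(l+x)/(l−x)|) with
K > 0, γ ≠ 0 changes sign infinitely often in every left neighborhood of x = l: there are
sequences in (−l,l) tending to l from the left on which it is positive, resp. negative. -/
theorem stmt_17 (l K γ : ℝ) (hl : 0 < l) (hK : 0 < K) (hγ : γ ≠ 0) :
    (∃ a : ℕ → ℝ, (∀ n, a n ∈ Ioo (-l) l) ∧
      Tendsto a atTop (nhdsWithin l (Iio l)) ∧
      ∀ n, 0 < K * Real.sqrt (l ^ 2 - (a n) ^ 2) *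
        Real.cos (γ * Real.log |(l + a n) / (l - a n)|))
    ∧
    (∃ b : ℕ → ℝ, (∀ n, b n ∈ Ioo (-l) l) ∧
      Tendsto b atTop (nhdsWithin l (Iio l)) ∧
      ∀ n, K * Real.sqrt (l ^ 2 - (b n) ^ 2) *
        Real.cos (γ * Real.log |(l + b n) / (l - b n)|) < 0) := by
  obtain ⟨a, ha, hat, hua⟩ := exists_tendsto_englandOpening_eq_cos K hl hγ 0
  obtain ⟨b, hb, hbt, hub⟩ := exists_tendsto_englandOpening_eq_cos K hl hγ π
  refine ⟨⟨a, ha, hat, fun n => ?_⟩, ⟨b, hb, hbt, fun n => ?_⟩⟩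
  · change 0 < englandOpening l K γ (a n)
    rw [hua, cos_zero, mul_one]
    exact mul_pos hK (sqrt_sq_sub_sq_pos (ha n))
  · change englandOpening l K γ (b n) < 0
    rw [hub, cos_pi, mul_neg_one, neg_neg_iff_pos]
    exact mul_pos hK (sqrt_sq_sub_sq_pos (hb n))
end
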